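/- arXiv:1712.00401 — 3 statements merged into one kernel-verified Lean document; each statement's English description precedes it below -/
import Mathlib

section
/- Completeness of the space of càdlàg adapted processes in the ucp topology: Let X be a Banach space and let (V^n)_{n≥1} be a sequence of càdlàg adapted X-valued processes on [0,∞) × Ω that is Cauchy in the ucp topology, i.e. for every t ≥ 0 and K > 0, P( sup_{0≤s≤t} ‖V^n_s − V^m_s‖ > K ) → 0 as n, m → ∞. Then there exists a càdlàg adapted X-valued process V such that V^n → V in the ucp topology, i.e. for every t ≥ 0 and K > 0, P( sup_{0≤s≤t} ‖V_s − V^n_s‖ > K ) → 0 as n → ∞. -/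
open MeasureTheory Filter
open scoped NNReal ENNReal

/-- A function `f : [0,∞) → X` is càdlàg: it is right-continuous and has left limits
at every positive time. -/
def CadlagPath {X : Type*} [TopologicalSpace X] (f : ℝ≥0 → X) : Prop :=
  (∀ t : ℝ≥0, ContinuousWithinAt f (Set.Ici t) t) ∧
    ∀ t : ℝ≥0, 0 < t → ∃ l : X, Tendsto f (nhdsWithin t (Set.Iio t)) (nhds l)

/-- The filtration `ℱ` is right-continuous. -/
def RightContinuousFiltration {Ω : Type*} {m : MeasurableSpace Ω}
    (ℱ : MeasureTheory.Filtration ℝ≥0 m) : Prop :=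
  ∀ t : ℝ≥0, (ℱ t : MeasurableSpace Ω) = ⨅ (s : ℝ≥0) (_ : t < s), (ℱ s : MeasurableSpace Ω)

/-- The filtration `ℱ` contains all `μ`-null sets. -/
def CompleteFiltration {Ω : Type*} {m : MeasurableSpace Ω} (μ : Measure Ω)
    (ℱ : MeasureTheory.Filtration ℝ≥0 m) : Prop :=
  ∀ s : Set Ω, μ s = 0 → MeasurableSet[ℱ 0] s

/-! Pick a subsequence `V ∘ φ` such that the event that `V (φ k)` and `V (φ (k + 1))` differ by
more than `2⁻ᵏ` somewhere on `[0, k]` has probability at most `2⁻ᵏ`. By Borel–Cantelli, almost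
every path of `V ∘ φ` is eventually geometrically Cauchy, uniformly on every compact interval,
so it converges locally uniformly to a càdlàg path. The tail sums `∑_{i ≥ k} 2⁻ⁱ` bound the
probability that the limit is far from `V (φ k)` on `[0, t]`, and the Cauchy property transfers
this convergence from the subsequence to the whole sequence. -/

open Topology Uniformity

theorem cauchy_map_of_uniform_approx {α X : Type*} [UniformSpace X] {l : Filter α} [l.NeBot]
    {g : α → X} (h : ∀ u ∈ 𝓤 X, ∃ F : α → X, Cauchy (map F l) ∧ ∀ᶠ x in l, (g x, F x) ∈ u) :
    Cauchy (map g l) := by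
  refine cauchy_map_iff'.2 fun u hu => ?_
  obtain ⟨v, hv, hvu⟩ := comp3_mem_uniformity hu
  obtain ⟨F, hF, hgF⟩ := h (v ∩ Prod.swap ⁻¹' v) (inter_mem hv (symm_le_uniformity hv))
  show ∀ᶠ q in l ×ˢ l, (g q.1, g q.2) ∈ u
  filter_upwards [cauchy_map_iff'.1 hF hv, hgF.prod_inl l, hgF.prod_inr l] with q hFF hg₁ hg₂
  exact hvu ⟨F q.1, hg₁.1, F q.2, hFF, hg₂.2⟩

theorem cadlagPath_const {X : Type*} [TopologicalSpace X] (x : X) :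
    CadlagPath fun _ : ℝ≥0 => x :=
  ⟨fun _ => continuousWithinAt_const, fun _ _ => ⟨x, tendsto_const_nhds⟩⟩

theorem CadlagPath.of_tendstoUniformlyOn {ι X : Type*} [UniformSpace X] [CompleteSpace X]
    {p : Filter ι} [p.NeBot] {F : ι → ℝ≥0 → X} {g : ℝ≥0 → X} (hF : ∀ i, CadlagPath (F i))
    (hFg : ∀ t, TendstoUniformlyOn F g p (Set.Iic t)) : CadlagPath g := by
  refine ⟨fun t => ?_, fun t ht => ?_⟩
  · refine continuousWithinAt_of_locally_uniform_approx_of_continuousWithinAt (le_refl t)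
      fun u hu => ?_
    obtain ⟨i, hi⟩ := (hFg (t + 1) u hu).exists
    exact ⟨Set.Iic (t + 1), mem_nhdsWithin_of_mem_nhds (Iic_mem_nhds (lt_add_one t)), F i,
      (hF i).1 t, hi⟩
  · have : (𝓝[<] t).NeBot := nhdsLT_neBot_of_exists_lt ⟨0, ht⟩
    refine CompleteSpace.complete (cauchy_map_of_uniform_approx fun u hu => ?_)
    obtain ⟨i, hi⟩ := (hFg t u hu).exists
    obtain ⟨l, hl⟩ := (hF i).2 t ht
    exact ⟨F i, hl.cauchy_map,
      eventually_mem_nhdsWithin.mono fun s hs => hi s (Set.mem_Iic.2 (le_of_lt hs))⟩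

theorem dist_limUnder_le_of_dist_succ_le {X : Type*} [PseudoMetricSpace X] [CompleteSpace X]
    [Nonempty X] {x : ℕ → X} {k : ℕ} (h : ∀ i ≥ k, dist (x i) (x (i + 1)) ≤ 2⁻¹ ^ i) :
    dist (x k) (limUnder atTop x) ≤ 2 * 2⁻¹ ^ k := by
  have hshift : ∀ n, dist (x (n + k)) (x (n + 1 + k)) ≤ 2⁻¹ ^ k * 2⁻¹ ^ n := fun n => by
    simpa [pow_add, mul_comm, Nat.add_right_comm] using h (n + k) (Nat.le_add_left k n)
  have hx : CauchySeq x :=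
    (cauchySeq_shift k).1 (cauchySeq_of_le_geometric _ _ (by norm_num) hshift)
  have hlim := dist_le_of_le_geometric_of_tendsto₀ _ _ (by norm_num) hshift
    (hx.tendsto_limUnder.comp (tendsto_add_atTop_nat k))
  rw [zero_add] at hlim
  refine hlim.trans_eq ?_
  norm_num
  ring

theorem exists_strictMono_tsum_ne_top {d : ℕ → ℕ → ℕ → ℝ≥0∞}
    (hd : ∀ k, Tendsto (fun q : ℕ × ℕ => d k q.1 q.2) atTop (𝓝 0)) :
    ∃ φ : ℕ → ℕ, StrictMono φ ∧ ∑' k, d k (φ k) (φ (k + 1)) ≠ ∞ := by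
  have hsmall : ∀ k, ∃ N, ∀ a ≥ N, ∀ b ≥ N, d k a b ≤ 2⁻¹ ^ k := fun k =>
    eventually_atTop_prod_self'.1
      ((hd k).eventually (ge_mem_nhds (ENNReal.pow_pos (by norm_num) k)))
  obtain ⟨φ, hφ, hφN⟩ := extraction_forall_of_eventually' fun k =>
    (hsmall k).imp fun N hN j hj a ha b hb => hN a (hj.trans ha) b (hj.trans hb)
  refine ⟨φ, hφ, ne_top_of_le_ne_top (b := ∑' k : ℕ, 2⁻¹ ^ k) ?_ ?_⟩
  · rw [ENNReal.tsum_geometric, ENNReal.one_sub_inv_two, inv_inv]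
    exact ENNReal.ofNat_ne_top
  · exact ENNReal.tsum_le_tsum fun k => hφN k _ le_rfl _ (hφ (Nat.lt_succ_self k)).le

theorem eventually_two_mul_inv_two_pow_lt {ε : ℝ} (hε : 0 < ε) :
    ∀ᶠ k : ℕ in atTop, 2 * (2⁻¹ : ℝ) ^ k < ε := by
  have := (tendsto_pow_atTop_nhds_zero_of_lt_one (r := (2⁻¹ : ℝ)) (by norm_num)
    (by norm_num)).const_mul 2
  exact this.eventually (gt_mem_nhds (by simpa using hε))

section Processes

variable {Ω X : Type*} [NormedAddCommGroup X]

def ucpExceedSet (f g : ℝ≥0 → Ω → X) (t : ℝ≥0) (K : ℝ) : Set Ω :=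
  {ω | ∃ s ∈ Set.Icc (0 : ℝ≥0) t, K < ‖f s ω - g s ω‖}

theorem ucpExceedSet_add_subset (f g h : ℝ≥0 → Ω → X) (t : ℝ≥0) (K₁ K₂ : ℝ) :
    ucpExceedSet f h t (K₁ + K₂) ⊆ ucpExceedSet f g t K₁ ∪ ucpExceedSet g h t K₂ := by
  rintro ω ⟨s, hs, hK⟩
  by_contra hω
  have h₁ : ‖f s ω - g s ω‖ ≤ K₁ := not_lt.1 fun h₁ => hω (Or.inl ⟨s, hs, h₁⟩)
  have h₂ : ‖g s ω - h s ω‖ ≤ K₂ := not_lt.1 fun h₂ => hω (Or.inr ⟨s, hs, h₂⟩)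
  linarith [norm_sub_le_norm_sub_add_norm_sub (f s ω) (g s ω) (h s ω)]

theorem tendsto_measure_ucpExceedSet_of_subseq {m : MeasurableSpace Ω} {μ : Measure Ω}
    {V : ℕ → ℝ≥0 → Ω → X} {W : ℝ≥0 → Ω → X} {φ : ℕ → ℕ} (hφ : Tendsto φ atTop atTop)
    {t : ℝ≥0} {K : ℝ}
    (hV : Tendsto (fun q : ℕ × ℕ => μ (ucpExceedSet (V q.1) (V q.2) t (K / 2))) atTop (𝓝 0))
    (hW : Tendsto (fun k => μ (ucpExceedSet W (V (φ k)) t (K / 2))) atTop (𝓝 0)) :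
    Tendsto (fun n => μ (ucpExceedSet W (V n) t K)) atTop (𝓝 0) := by
  refine ENNReal.tendsto_atTop_zero.2 fun ε hε => ?_
  have hε2 : 0 < ε / 2 := ENNReal.half_pos hε.ne'
  obtain ⟨N, hN⟩ := eventually_atTop_prod_self'.1 (hV.eventually (ge_mem_nhds hε2))
  obtain ⟨k, hk, hφk⟩ :=
    ((hW.eventually (ge_mem_nhds hε2)).and (hφ.eventually_ge_atTop N)).exists
  refine ⟨N, fun n hn => ?_⟩
  calc μ (ucpExceedSet W (V n) t K)
      ≤ μ (ucpExceedSet W (V (φ k)) t (K / 2) ∪ ucpExceedSet (V (φ k)) (V n) t (K / 2)) :=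
        measure_mono <| by
          simpa only [add_halves] using ucpExceedSet_add_subset W (V (φ k)) (V n) t (K / 2) (K / 2)
    _ ≤ ε / 2 + ε / 2 := (measure_union_le _ _).trans (add_le_add hk (hN _ hφk _ hn))
    _ = ε := ENNReal.add_halves ε

/-- Both the horizon `k` and the tolerance `2⁻ᵏ` move with `k`, so that a single fast
subsequence controls every compact time interval at once. -/
def largeIncrementSet (U : ℕ → ℝ≥0 → Ω → X) (k : ℕ) : Set Ω :=
  ucpExceedSet (U k) (U (k + 1)) k (2⁻¹ ^ k)

variable (U : ℕ → ℝ≥0 → Ω → X)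

/-- The limit is set to `0` on the null event where the increments are not eventually small;
completeness of the filtration keeps this adapted. -/
noncomputable def ucpFastLimit : ℝ≥0 → Ω → X := fun s =>
  {ω | ∀ᶠ k in atTop, ω ∉ largeIncrementSet U k}.indicator
    fun ω => limUnder atTop fun k => U k s ω

variable {U}

theorem ucpFastLimit_apply_of_eventually {ω : Ω} (h : ∀ᶠ k in atTop, ω ∉ largeIncrementSet U k)
    (s : ℝ≥0) : ucpFastLimit U s ω = limUnder atTop fun k => U k s ω :=
  Set.indicator_of_mem (s := {ω | ∀ᶠ k in atTop, ω ∉ largeIncrementSet U k}) h _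

theorem ucpFastLimit_apply_of_not_eventually {ω : Ω}
    (h : ¬∀ᶠ k in atTop, ω ∉ largeIncrementSet U k) (s : ℝ≥0) : ucpFastLimit U s ω = 0 :=
  Set.indicator_of_notMem (s := {ω | ∀ᶠ k in atTop, ω ∉ largeIncrementSet U k}) h _

variable [CompleteSpace X]

theorem dist_limUnder_le_of_forall_notMem {ω : Ω} {k : ℕ}
    (h : ∀ i ≥ k, ω ∉ largeIncrementSet U i) {s : ℝ≥0} (hs : s ≤ k) :
    dist (U k s ω) (limUnder atTop fun i => U i s ω) ≤ 2 * 2⁻¹ ^ k := by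
  refine dist_limUnder_le_of_dist_succ_le (x := fun i => U i s ω) fun i hi => ?_
  rw [dist_eq_norm]
  by_contra! hlt
  exact h i hi ⟨s, ⟨zero_le, hs.trans (by exact_mod_cast hi)⟩, hlt⟩

theorem tendstoUniformlyOn_limUnder {ω : Ω}
    (h : ∀ᶠ i in atTop, ω ∉ largeIncrementSet U i) (t : ℝ≥0) :
    TendstoUniformlyOn (fun i s => U i s ω) (fun s => limUnder atTop fun i => U i s ω) atTop
      (Set.Iic t) := by
  refine Metric.tendstoUniformlyOn_iff.2 fun ε hε => ?_
  obtain ⟨k₀, hk₀⟩ := eventually_atTop.1 h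
  filter_upwards [eventually_two_mul_inv_two_pow_lt hε, eventually_ge_atTop k₀,
    eventually_ge_atTop ⌈t⌉₊] with k hk hk₀k htk s hs
  rw [dist_comm]
  refine (dist_limUnder_le_of_forall_notMem (fun i hi => hk₀ i (hk₀k.trans hi)) ?_).trans_lt hk
  exact (Set.mem_Iic.1 hs).trans ((Nat.le_ceil t).trans (by exact_mod_cast htk))

theorem cadlagPath_ucpFastLimit (hU : ∀ k ω, CadlagPath fun s => U k s ω) (ω : Ω) :
    CadlagPath fun s => ucpFastLimit U s ω := by
  by_cases hω : ∀ᶠ k in atTop, ω ∉ largeIncrementSet U k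
  · simp only [ucpFastLimit_apply_of_eventually hω]
    exact CadlagPath.of_tendstoUniformlyOn (fun k => hU k ω) (tendstoUniformlyOn_limUnder hω)
  · simp only [ucpFastLimit_apply_of_not_eventually hω]
    exact cadlagPath_const 0

theorem stronglyAdapted_ucpFastLimit {m : MeasurableSpace Ω} {μ : Measure Ω}
    {ℱ : Filtration ℝ≥0 m} (hℱ : CompleteFiltration μ ℱ) (hU : ∀ k, StronglyAdapted ℱ (U k))
    (hsum : ∑' k, μ (largeIncrementSet U k) ≠ ∞) : StronglyAdapted ℱ (ucpFastLimit U) :=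
  fun s =>
    have hlim : StronglyMeasurable[ℱ s] fun ω => limUnder atTop fun k => U k s ω :=
      letI := ℱ s
      StronglyMeasurable.limUnder fun k => hU k s
    have hgood : MeasurableSet[ℱ s] {ω | ∀ᶠ k in atTop, ω ∉ largeIncrementSet U k} :=
      ℱ.mono zero_le _ (hℱ _ (ae_eventually_notMem hsum)).of_compl
    hlim.indicator hgood

theorem tendsto_measure_ucpExceedSet_ucpFastLimit {m : MeasurableSpace Ω} {μ : Measure Ω}
    (hsum : ∑' k, μ (largeIncrementSet U k) ≠ ∞) (t : ℝ≥0) {K : ℝ} (hK : 0 < K) :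
    Tendsto (fun k => μ (ucpExceedSet (ucpFastLimit U) (U k) t K)) atTop (𝓝 0) := by
  have hsub : ∀ᶠ k in atTop,
      ucpExceedSet (ucpFastLimit U) (U k) t K ⊆ ⋃ i, largeIncrementSet U (i + k) := by
    filter_upwards [eventually_two_mul_inv_two_pow_lt hK, eventually_ge_atTop ⌈t⌉₊]
      with k hk htk
    rintro ω ⟨s, hs, hKs⟩
    by_contra hω
    have hgood : ∀ i ≥ k, ω ∉ largeIncrementSet U i := fun i hi hmem =>
      hω (Set.mem_iUnion.2 ⟨i - k, by rwa [Nat.sub_add_cancel hi]⟩)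
    have hdist := dist_limUnder_le_of_forall_notMem hgood
      (hs.2.trans ((Nat.le_ceil t).trans (by exact_mod_cast htk)))
    rw [ucpFastLimit_apply_of_eventually (eventually_atTop.2 ⟨k, hgood⟩), ← dist_eq_norm,
      dist_comm] at hKs
    linarith
  refine tendsto_of_tendsto_of_tendsto_of_le_of_le' tendsto_const_nhds
    (ENNReal.tendsto_sum_nat_add _ hsum) (Eventually.of_forall fun _ => zero_le) ?_
  filter_upwards [hsub] with k hk using (measure_mono hk).trans (measure_iUnion_le _)

end Processes

theorem cadlag_adapted_complete_ucp_general
    {Ω : Type*} {m : MeasurableSpace Ω} {μ : Measure Ω}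
    {X : Type*} [NormedAddCommGroup X] [CompleteSpace X]
    (ℱ : Filtration ℝ≥0 m)
    (hcompl : CompleteFiltration μ ℱ)
    (V : ℕ → ℝ≥0 → Ω → X)
    (hVcadlag : ∀ n ω, CadlagPath fun s => V n s ω)
    (hVadapted : ∀ n, StronglyAdapted ℱ (V n))
    (hCauchy : ∀ (t : ℝ≥0) (K : ℝ), 0 < K →
      Tendsto (fun q : ℕ × ℕ =>
          μ {ω | ∃ s ∈ Set.Icc (0 : ℝ≥0) t, K < ‖V q.1 s ω - V q.2 s ω‖})
        atTop (nhds 0)) :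
    ∃ W : ℝ≥0 → Ω → X,
      (∀ ω, CadlagPath fun s => W s ω) ∧ StronglyAdapted ℱ W ∧
      ∀ (t : ℝ≥0) (K : ℝ), 0 < K →
        Tendsto (fun n : ℕ =>
            μ {ω | ∃ s ∈ Set.Icc (0 : ℝ≥0) t, K < ‖W s ω - V n s ω‖})
          atTop (nhds 0) := by
  obtain ⟨φ, hφ, hsum⟩ :=
    exists_strictMono_tsum_ne_top (d := fun k a b => μ (ucpExceedSet (V a) (V b) k (2⁻¹ ^ k)))
      fun k => hCauchy k (2⁻¹ ^ k) (by positivity)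
  refine ⟨ucpFastLimit fun k => V (φ k), cadlagPath_ucpFastLimit fun k => hVcadlag (φ k),
    stronglyAdapted_ucpFastLimit hcompl (fun k => hVadapted (φ k)) hsum, fun t K hK => ?_⟩
  exact tendsto_measure_ucpExceedSet_of_subseq hφ.tendsto_atTop (hCauchy t _ (half_pos hK))
    (tendsto_measure_ucpExceedSet_ucpFastLimit hsum t (half_pos hK))

/-- **Completeness of the space of càdlàg adapted processes in the ucp topology.**
If a sequence `(V n)` of càdlàg adapted `X`-valued processes is Cauchy in the ucp
topology (for all `t ≥ 0` and `K > 0`,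
`P(sup_{0≤s≤t} ‖Vⁿ_s - Vᵐ_s‖ > K) → 0` as `n, m → ∞`), then there exists a càdlàg
adapted process `V` with `V n → V` in the ucp topology. -/
theorem cadlag_adapted_complete_ucp
    {Ω : Type*} {m : MeasurableSpace Ω} {μ : Measure Ω} [IsProbabilityMeasure μ]
    {X : Type*} [NormedAddCommGroup X] [NormedSpace ℝ X] [CompleteSpace X]
    (ℱ : Filtration ℝ≥0 m)
    (hright : RightContinuousFiltration ℱ) (hcompl : CompleteFiltration μ ℱ)
    (V : ℕ → ℝ≥0 → Ω → X)
    (hVcadlag : ∀ n ω, CadlagPath fun s => V n s ω)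
    (hVadapted : ∀ n, StronglyAdapted ℱ (V n))
    (hCauchy : ∀ (t : ℝ≥0) (K : ℝ), 0 < K →
      Tendsto (fun q : ℕ × ℕ =>
          μ {ω | ∃ s ∈ Set.Icc (0 : ℝ≥0) t, K < ‖V q.1 s ω - V q.2 s ω‖})
        atTop (nhds 0)) :
    ∃ W : ℝ≥0 → Ω → X,
      (∀ ω, CadlagPath fun s => W s ω) ∧ StronglyAdapted ℱ W ∧
      ∀ (t : ℝ≥0) (K : ℝ), 0 < K →
        Tendsto (fun n : ℕ =>
            μ {ω | ∃ s ∈ Set.Icc (0 : ℝ≥0) t, K < ‖W s ω - V n s ω‖})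
          atTop (nhds 0) :=
  cadlag_adapted_complete_ucp_general ℱ hcompl V hVcadlag hVadapted hCauchy
end

section
/- Purely discontinuous martingales are closed under L¹-limits: Let X be a Banach space, let ξ and ξ_n (n ≥ 1) belong to L¹(Ω; X) with ξ_n → ξ in L¹(Ω; X), and define the closed martingales M_t := E(ξ | 𝓕_t) and M^n_t := E(ξ_n | 𝓕_t) for t ≥ 0. Suppose that each M^n is purely discontinuous, i.e. for every bounded continuous real-valued martingale N with N_0 = 0 the product process (M^n_t N_t)_{t≥0} is a martingale. Then M is purely discontinuous in the same sense: for every bounded continuous real-valued martingale N with N_0 = 0, the product (M_t N_t)_{t≥0} is a martingale. -/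
/-! For a fixed bounded martingale `N` with `|N| ≤ C` and times `s ≤ t`, both sides of the
martingale identity `E(N_t M_t | 𝓕_s) = N_s M_s`, with `M = E(ξ | 𝓕_·)`, depend continuously on
`ξ` in `L¹`: conditional expectation is an `L¹`-contraction and multiplication by `N` has norm at
most `C`. The identity holds for every `ξₙ`, and `L¹`-limits (being limits in measure) are unique
almost everywhere, so it holds for `ξ`. -/

open MeasureTheory Filter
open scoped NNReal ENNReal

/-- An `X`-valued martingale `M` is purely discontinuous if `(N_t • M_t)` is a
martingale for every bounded continuous real-valued martingale `N` with `N_0 = 0`. -/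
def PurelyDiscontinuous {Ω : Type*} {m : MeasurableSpace Ω} (μ : Measure Ω)
    {X : Type*} [NormedAddCommGroup X] [NormedSpace ℝ X] [CompleteSpace X]
    (ℱ : MeasureTheory.Filtration ℝ≥0 m) (M : ℝ≥0 → Ω → X) : Prop :=
  ∀ N : ℝ≥0 → Ω → ℝ, Martingale N ℱ μ →
    (∀ ω, Continuous fun t => N t ω) →
    (∃ C : ℝ, ∀ t : ℝ≥0, ∀ᵐ ω ∂μ, |N t ω| ≤ C) →
    (∀ᵐ ω ∂μ, N 0 ω = 0) →
    Martingale (fun t ω => N t ω • M t ω) ℱ μ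

open Topology

section LpConvergence

variable {Ω ι E : Type*} {m m0 : MeasurableSpace Ω} {μ : Measure Ω} [NormedAddCommGroup E]
  {l : Filter ι} {p : ℝ≥0∞} {fs : ι → Ω → E} {f : Ω → E}

theorem eLpNorm_one_eq_ofReal_integral_norm (hf : Integrable f μ) :
    eLpNorm f 1 μ = ENNReal.ofReal (∫ ω, ‖f ω‖ ∂μ) := by
  rw [eLpNorm_one_eq_lintegral_enorm, ofReal_integral_norm_eq_lintegral_enorm hf]

variable [NormedSpace ℝ E]

theorem tendsto_eLpNorm_smul_sub {c : Ω → ℝ} {C : ℝ} (hc : ∀ᵐ ω ∂μ, |c ω| ≤ C)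
    (h : Tendsto (fun i => eLpNorm (fs i - f) p μ) l (𝓝 0)) :
    Tendsto (fun i => eLpNorm (c • fs i - c • f) p μ) l (𝓝 0) := by
  have hbound : ∀ i,
      eLpNorm (c • fs i - c • f) p μ ≤ ENNReal.ofReal C * eLpNorm (fs i - f) p μ := fun i =>
    eLpNorm_le_mul_eLpNorm_of_ae_le_mul (hc.mono fun ω hω => by
      simpa only [Pi.sub_apply, Pi.smul_apply', ← smul_sub, norm_smul, Real.norm_eq_abs]
        using mul_le_mul_of_nonneg_right hω (norm_nonneg (fs i ω - f ω))) p
  have hlim : Tendsto (fun i => ENNReal.ofReal C * eLpNorm (fs i - f) p μ) l (𝓝 0) := by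
    simpa using ENNReal.Tendsto.const_mul h (Or.inr ENNReal.ofReal_ne_top)
  exact tendsto_of_tendsto_of_tendsto_of_le_of_le tendsto_const_nhds hlim (fun _ => bot_le) hbound

variable [CompleteSpace E]

theorem eLpNorm_condExp_sub_le {g : Ω → E} (hf : Integrable f μ) (hg : Integrable g μ)
    (hp : 1 ≤ p) : eLpNorm (μ[f|m] - μ[g|m]) p μ ≤ eLpNorm (f - g) p μ :=
  (eLpNorm_congr_ae (condExp_sub hf hg m).symm).trans_le (eLpNorm_condExp_le_eLpNorm _ hp)

theorem tendsto_eLpNorm_condExp_sub (hfs : ∀ i, Integrable (fs i) μ) (hf : Integrable f μ)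
    (hp : 1 ≤ p) (h : Tendsto (fun i => eLpNorm (fs i - f) p μ) l (𝓝 0)) :
    Tendsto (fun i => eLpNorm (μ[fs i|m] - μ[f|m]) p μ) l (𝓝 0) :=
  tendsto_of_tendsto_of_tendsto_of_le_of_le tendsto_const_nhds h (fun _ => bot_le)
    fun i => eLpNorm_condExp_sub_le (hfs i) hf hp

end LpConvergence

theorem purely_discontinuous_closed_under_L1_limits_general
    {Ω : Type*} {m : MeasurableSpace Ω} {μ : Measure Ω}
    {X : Type*} [NormedAddCommGroup X] [NormedSpace ℝ X] [CompleteSpace X]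
    (ℱ : Filtration ℝ≥0 m)
    (ξ : Ω → X) (ξs : ℕ → Ω → X)
    (hξ : Integrable ξ μ) (hξs : ∀ n, Integrable (ξs n) μ)
    (hL1 : Tendsto (fun n => ∫ ω, ‖ξs n ω - ξ ω‖ ∂μ) atTop (nhds 0))
    (hpd : ∀ n, PurelyDiscontinuous μ ℱ fun t => μ[ξs n | ℱ t]) :
    PurelyDiscontinuous μ ℱ fun t => μ[ξ | ℱ t] := by
  intro N hN hNcont ⟨C, hC⟩ hN0
  have hξL1 : Tendsto (fun n => eLpNorm (ξs n - ξ) 1 μ) atTop (𝓝 0) := by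
    simpa [eLpNorm_one_eq_ofReal_integral_norm ((hξs _).sub hξ)] using ENNReal.tendsto_ofReal hL1
  have integrable_smul_condExp : ∀ (f : Ω → X) t, Integrable (N t • μ[f|ℱ t]) μ := fun f t =>
    integrable_condExp.bdd_smul C ((hN.stronglyMeasurable t).mono (ℱ.le t)).aestronglyMeasurable
      (by simpa only [Real.norm_eq_abs] using hC t)
  have hprod : ∀ t, Tendsto (fun n => eLpNorm (N t • μ[ξs n|ℱ t] - N t • μ[ξ|ℱ t]) 1 μ)
      atTop (𝓝 0) := fun t =>
    tendsto_eLpNorm_smul_sub (hC t) (tendsto_eLpNorm_condExp_sub hξs hξ le_rfl hξL1)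
  refine ⟨fun t => (hN.stronglyMeasurable t).smul stronglyMeasurable_condExp, fun s t hst => ?_⟩
  refine tendstoInMeasure_ae_unique (u := atTop) (f := fun n => μ[N t • μ[ξs n|ℱ t]|ℱ s]) ?_ ?_
  · exact tendstoInMeasure_of_tendsto_eLpNorm one_ne_zero (fun _ => integrable_condExp.1)
      integrable_condExp.1 (tendsto_eLpNorm_condExp_sub (fun _ => integrable_smul_condExp _ t)
        (integrable_smul_condExp _ t) le_rfl (hprod t))
  · refine .congr_left (fun n => ((hpd n N hN hNcont ⟨C, hC⟩ hN0).condExp_ae_eq hst).symm) ?_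
    exact tendstoInMeasure_of_tendsto_eLpNorm one_ne_zero
      (fun _ => (integrable_smul_condExp _ s).1) (integrable_smul_condExp _ s).1 (hprod s)

/-- **Purely discontinuous martingales are closed under `L¹`-limits.**
Let `ξ, ξₙ ∈ L¹(Ω; X)` with `ξₙ → ξ` in `L¹`, and consider the closed martingales
`M t = E(ξ | ℱ t)` and `Mⁿ t = E(ξₙ | ℱ t)`. If each `Mⁿ` is purely discontinuous
(the product with every bounded continuous real martingale vanishing at `0` is a
martingale), then so is `M`. -/
theorem purely_discontinuous_closed_under_L1_limits
    {Ω : Type*} {m : MeasurableSpace Ω} {μ : Measure Ω} [IsProbabilityMeasure μ]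
    {X : Type*} [NormedAddCommGroup X] [NormedSpace ℝ X] [CompleteSpace X]
    (ℱ : Filtration ℝ≥0 m)
    (hright : RightContinuousFiltration ℱ) (hcompl : CompleteFiltration μ ℱ)
    (ξ : Ω → X) (ξs : ℕ → Ω → X)
    (hξ : Integrable ξ μ) (hξs : ∀ n, Integrable (ξs n) μ)
    (hL1 : Tendsto (fun n => ∫ ω, ‖ξs n ω - ξ ω‖ ∂μ) atTop (nhds 0))
    (hpd : ∀ n, PurelyDiscontinuous μ ℱ fun t => μ[ξs n | ℱ t]) :
    PurelyDiscontinuous μ ℱ fun t => μ[ξ | ℱ t] :=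
  purely_discontinuous_closed_under_L1_limits_general ℱ ξ ξs hξ hξs hL1 hpd
end

section
/- Absence of a jump at a stopping time is preserved under ucp limits: Let X be a Banach space, let σ be a stopping time, and let V^n (n ≥ 1) and V be càdlàg adapted X-valued processes such that V^n → V in the ucp topology. If for every n the jump of V^n at σ vanishes, i.e. ΔV^n_σ = 0 a.s. on {σ < ∞}, then ΔV_σ = 0 a.s. on {σ < ∞}. Here, for a càdlàg process W, ΔW_s(ω) := W_s(ω) − lim_{u↑s} W_u(ω) for s > 0, and ΔW_0 := W_0. -/
open MeasureTheory Filter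
open scoped NNReal ENNReal

/-- The jump of a path `f` at time `s` vanishes: for `s = 0` this means `f 0 = 0`
(the jump at `0` is `f 0`), and for `s > 0` it means `f s` equals the left limit of
`f` at `s`. -/
def JumpVanishesAt {X : Type*} [NormedAddCommGroup X] (f : ℝ≥0 → X) (s : ℝ≥0) : Prop :=
  (s = 0 → f 0 = 0) ∧ (0 < s → f s = Function.leftLim f s)

open Topology

/-
Along a suitable subsequence, ucp convergence becomes almost sure uniform convergence on
`[0, T]`, because ucp convergence is convergence in measure in the uniform metric on `[0, T]`.
Pathwise, a uniform limit on `[0, σ]` of paths that are left-continuous at `σ` is again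
left-continuous at `σ` (Moore–Osgood), and `W 0 = lim Vⁿ 0 = 0` when `σ = 0`.
-/

theorem JumpVanishesAt.tendsto_nhdsLT {X : Type*} [NormedAddCommGroup X] {f : ℝ≥0 → X}
    {s : ℝ≥0} (h : JumpVanishesAt f s) (hs : 0 < s) (hleft : ∃ l, Tendsto f (𝓝[<] s) (𝓝 l)) :
    Tendsto f (𝓝[<] s) (𝓝 (f s)) := by
  have : (𝓝[<] s).NeBot := nhdsLT_neBot_of_exists_lt ⟨0, hs⟩
  obtain ⟨l, hl⟩ := hleft
  rwa [h.2 hs, leftLim_eq_of_tendsto hl]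

theorem TendstoUniformlyOn.jumpVanishesAt {ι X : Type*} [NormedAddCommGroup X]
    {p : Filter ι} [p.NeBot] {F : ι → ℝ≥0 → X} {f : ℝ≥0 → X} {s T : ℝ≥0}
    (hF : TendstoUniformlyOn F f p (Set.Icc 0 T)) (hsT : s ≤ T)
    (hleft : ∀ᶠ i in p, 0 < s → ∃ l, Tendsto (F i) (𝓝[<] s) (𝓝 l))
    (hjump : ∀ᶠ i in p, JumpVanishesAt (F i) s) :
    JumpVanishesAt f s := by
  refine ⟨fun hs0 => ?_, fun hs => ?_⟩
  · have hF0 : ∀ᶠ i in p, F i 0 = 0 := hjump.mono fun i hi => hi.1 hs0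
    exact tendsto_nhds_unique (hF.tendsto_at ⟨le_rfl, zero_le⟩)
      (tendsto_const_nhds.congr' (hF0.mono fun i hi => hi.symm))
  · have : (𝓝[<] s).NeBot := nhdsLT_neBot_of_exists_lt ⟨0, hs⟩
    have hIio : 𝓝[<] s ≤ 𝓟 (Set.Icc 0 T) :=
      le_principal_iff.2 <| mem_of_superset self_mem_nhdsWithin
        fun u hu => ⟨zero_le, (le_of_lt hu).trans hsT⟩
    have hFleft : ∀ᶠ i in p, Tendsto (F i) (𝓝[<] s) (𝓝 (F i s)) := by
      filter_upwards [hjump, hleft] with i hi hli using hi.tendsto_nhdsLT hs (hli hs)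
    exact (leftLim_eq_of_tendsto <| (hF.tendstoUniformlyOnFilter.mono_right hIio)
      |>.tendsto_of_eventually_tendsto hFleft (hF.tendsto_at ⟨zero_le, hsT⟩)).symm

def TendstoUcp {Ω X : Type*} {m : MeasurableSpace Ω} [NormedAddCommGroup X] (μ : Measure Ω)
    (V : ℕ → ℝ≥0 → Ω → X) (W : ℝ≥0 → Ω → X) : Prop :=
  ∀ (t : ℝ≥0) (K : ℝ), 0 < K →
    Tendsto (fun n => μ {ω | ∃ s ∈ Set.Icc (0 : ℝ≥0) t, K < ‖W s ω - V n s ω‖}) atTop (𝓝 0)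

namespace TendstoUcp

variable {Ω X : Type*} {m : MeasurableSpace Ω} [NormedAddCommGroup X] {μ : Measure Ω}
  {V : ℕ → ℝ≥0 → Ω → X} {W : ℝ≥0 → Ω → X}

theorem tendstoInMeasure (h : TendstoUcp μ V W) (T : ℝ≥0) :
    TendstoInMeasure μ (fun n ω => UniformOnFun.ofFun {Set.Icc 0 T} (V n · ω)) atTop
      (fun ω => UniformOnFun.ofFun {Set.Icc 0 T} (W · ω)) := by
  refine tendstoInMeasure_of_ne_top fun ε hε hε_top => ?_
  have hhalf_top : ε / 2 ≠ ∞ := ENNReal.div_ne_top hε_top two_ne_zero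
  have hK : 0 < (ε / 2).toReal := ENNReal.toReal_pos (by simpa using hε.ne') hhalf_top
  refine tendsto_of_tendsto_of_tendsto_of_le_of_le tendsto_const_nhds (h T _ hK)
    (fun _ => zero_le) fun n => measure_mono fun ω hω => ?_
  obtain ⟨s, hs, hlt⟩ : ∃ s ∈ Set.Icc 0 T, ε / 2 < edist (V n s ω) (W s ω) := by
    have := (ENNReal.half_lt_self hε.ne' hε_top).trans_le hω
    simpa [UniformOnFun.edist_def, lt_iSup_iff] using this
  refine ⟨s, hs, ?_⟩
  rwa [edist_dist, ENNReal.lt_ofReal_iff_toReal_lt hhalf_top, dist_comm, dist_eq_norm] at hlt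

theorem exists_subseq_ae_tendstoUniformlyOn (h : TendstoUcp μ V W) (T : ℝ≥0) :
    ∃ φ : ℕ → ℕ, StrictMono φ ∧ ∀ᵐ ω ∂μ,
      TendstoUniformlyOn (fun k s => V (φ k) s ω) (W · ω) atTop (Set.Icc 0 T) := by
  obtain ⟨φ, hφ_mono, hφ⟩ := (h.tendstoInMeasure T).exists_seq_tendsto_ae
  exact ⟨φ, hφ_mono, hφ.mono fun ω hω =>
    UniformOnFun.tendsto_iff_tendstoUniformlyOn.1 hω _ rfl⟩

end TendstoUcp

theorem jump_vanishes_of_ucp_tendsto_general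
    {Ω : Type*} {m : MeasurableSpace Ω} {μ : Measure Ω}
    {X : Type*} [NormedAddCommGroup X]
    (σ : Ω → ℝ≥0∞)
    (V : ℕ → ℝ≥0 → Ω → X) (W : ℝ≥0 → Ω → X)
    (hVcadlag : ∀ n ω, CadlagPath fun s => V n s ω)
    (hucp : ∀ (t : ℝ≥0) (K : ℝ), 0 < K →
      Tendsto (fun n : ℕ =>
          μ {ω | ∃ s ∈ Set.Icc (0 : ℝ≥0) t, K < ‖W s ω - V n s ω‖})
        atTop (nhds 0))
    (hjumps : ∀ n, ∀ᵐ ω ∂μ, σ ω < ∞ →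
      JumpVanishesAt (fun s => V n s ω) (σ ω).toNNReal) :
    ∀ᵐ ω ∂μ, σ ω < ∞ → JumpVanishesAt (fun s => W s ω) (σ ω).toNNReal := by
  have hucp' : TendstoUcp μ V W := hucp
  have hconv : ∀ᵐ ω ∂μ, ∀ M : ℕ, ∃ φ : ℕ → ℕ,
      TendstoUniformlyOn (fun k s => V (φ k) s ω) (W · ω) atTop (Set.Icc 0 M) := by
    refine ae_all_iff.2 fun M => ?_
    obtain ⟨φ, -, hφ⟩ := hucp'.exists_subseq_ae_tendstoUniformlyOn M
    exact hφ.mono fun ω hω => ⟨φ, hω⟩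
  filter_upwards [hconv, ae_all_iff.2 hjumps] with ω hconvω hjumpsω hσω
  obtain ⟨M, hM⟩ := exists_nat_ge (σ ω).toNNReal
  obtain ⟨φ, hφ⟩ := hconvω M
  exact hφ.jumpVanishesAt hM (Eventually.of_forall fun k => (hVcadlag (φ k) ω).2 _)
    (Eventually.of_forall fun k => hjumpsω (φ k) hσω)

/-- **Absence of a jump at a stopping time is preserved under ucp limits.**
Let `σ` be a stopping time (possibly infinite), and let `Vⁿ, V` be càdlàg adapted
`X`-valued processes with `Vⁿ → V` in the ucp topology. If for every `n` the jump of
`Vⁿ` at `σ` vanishes a.s. on `{σ < ∞}`, then the jump of `V` at `σ` vanishes a.s. on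
`{σ < ∞}`. -/
theorem jump_vanishes_of_ucp_tendsto
    {Ω : Type*} {m : MeasurableSpace Ω} {μ : Measure Ω} [IsProbabilityMeasure μ]
    {X : Type*} [NormedAddCommGroup X] [NormedSpace ℝ X] [CompleteSpace X]
    (ℱ : Filtration ℝ≥0 m)
    (σ : Ω → ℝ≥0∞)
    (hσ : ∀ t : ℝ≥0, MeasurableSet[ℱ t] {ω | σ ω ≤ (t : ℝ≥0∞)})
    (V : ℕ → ℝ≥0 → Ω → X) (W : ℝ≥0 → Ω → X)
    (hVcadlag : ∀ n ω, CadlagPath fun s => V n s ω)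
    (hVadapted : ∀ n, StronglyAdapted ℱ (V n))
    (hWcadlag : ∀ ω, CadlagPath fun s => W s ω)
    (hWadapted : StronglyAdapted ℱ W)
    (hucp : ∀ (t : ℝ≥0) (K : ℝ), 0 < K →
      Tendsto (fun n : ℕ =>
          μ {ω | ∃ s ∈ Set.Icc (0 : ℝ≥0) t, K < ‖W s ω - V n s ω‖})
        atTop (nhds 0))
    (hjumps : ∀ n, ∀ᵐ ω ∂μ, σ ω < ∞ →
      JumpVanishesAt (fun s => V n s ω) (σ ω).toNNReal) :
    ∀ᵐ ω ∂μ, σ ω < ∞ → JumpVanishesAt (fun s => W s ω) (σ ω).toNNReal :=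
  jump_vanishes_of_ucp_tendsto_general (m := m) σ V W hVcadlag hucp hjumps
end
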